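/- If a connected graph G has at least 2 vertices, then pd(G) ≥ 2; moreover pd(G) = 2 if and only if G is a path. -/

import Mathlib

open SimpleGraph

/-- Distance from a vertex to a set of vertices: `min {d(v,x) : x ∈ P}`. -/
noncomputable def distToSet {V : Type*} (G : SimpleGraph V) (v : V) (P : Set V) : ℕ :=
  sInf ((G.dist v) '' P)

/-- `S` is a resolving set of `G`. -/
def IsResolvingSet {V : Type*} (G : SimpleGraph V) (S : Set V) : Prop :=
  ∀ u v : V, u ≠ v → ∃ w ∈ S, G.dist u w ≠ G.dist v w

/-- The metric dimension of `G`. -/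
noncomputable def metricDim {V : Type*} (G : SimpleGraph V) : ℕ :=
  sInf {n | ∃ S : Finset V, S.card = n ∧ IsResolvingSet G ↑S}

/-- `Π` is a resolving partition of `G`: a partition of the vertex set such that
distinct vertices have distinct vectors of distances to the parts. -/
def IsResolvingPartition {V : Type*} (G : SimpleGraph V) (Pi : Set (Set V)) : Prop :=
  Setoid.IsPartition Pi ∧
    ∀ u v : V, u ≠ v → ∃ P ∈ Pi, distToSet G u P ≠ distToSet G v P

/-- The partition dimension of `G`. -/
noncomputable def partitionDim {V : Type*} (G : SimpleGraph V) : ℕ :=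
  sInf {n | ∃ Pi : Finset (Set V), Pi.card = n ∧ IsResolvingPartition G ↑Pi}

/-
A resolving partition of a graph with two distinct vertices has at least two parts, since the part whose
distances separate them misses one of them, which lies in another part. In a path the distance to
an end vertex `v₀` is injective, so `{{v₀}, {v₀}ᶜ}` resolves. Conversely, if `{B, Bᶜ}` resolves a
connected graph, a vertex of `B` is determined by its distance to `Bᶜ` and a vertex of `Bᶜ` by its
distance to `B`. Numbering `Bᶜ` by `-d(v, B)` and `B` by `d(v, Bᶜ) - 1` is then injective and
changes by at most one along edges (across the cut it reads `-1, 0`). The values of such a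
numbering of a connected graph form an interval, and consecutive values are adjacent because
every walk between them has to cross that step; so the graph is a path.
-/

namespace SimpleGraph

variable {V : Type*} {G : SimpleGraph V}

theorem Reachable.dist_map_le {W : Type*} {H : SimpleGraph W} (f : G →g H) {u v : V}
    (h : G.Reachable u v) : H.dist (f u) (f v) ≤ G.dist u v := by
  obtain ⟨p, hp⟩ := h.exists_walk_length_eq_dist
  simpa [hp] using dist_le (p.map f)

theorem Iso.dist_eq {W : Type*} {H : SimpleGraph W} (e : G ≃g H) (u v : V) :
    H.dist (e u) (e v) = G.dist u v := by
  by_cases h : G.Reachable u v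
  · refine le_antisymm (h.dist_map_le e.toHom) ?_
    simpa using (Iso.reachable_iff (φ := e) |>.mpr h).dist_map_le e.symm.toHom
  · rw [dist_eq_zero_of_not_reachable h, dist_eq_zero_of_not_reachable (mt Iso.reachable_iff.mp h)]

theorem pathGraph_le_add_length {n : ℕ} {i j : Fin n} (p : (pathGraph n).Walk i j) :
    (j : ℕ) ≤ i + p.length := by
  induction p with
  | nil => simp
  | cons h p ih =>
    rw [pathGraph_adj] at h
    rw [Walk.length_cons]
    omega

theorem pathGraph_dist_of_le {n : ℕ} {i j : Fin n} (hij : i ≤ j) :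
    (pathGraph n).dist i j = j - i := by
  refine le_antisymm ?_ ?_
  · obtain ⟨d, hd⟩ := Nat.exists_eq_add_of_le (Fin.le_def.mp hij)
    induction d generalizing j with
    | zero => simp [Fin.ext (hd.trans (add_zero _)).symm]
    | succ d ih =>
      let j' : Fin n := ⟨i + d, by omega⟩
      have hadj : (pathGraph n).Adj j' j := pathGraph_adj.mpr (.inl (by simp only [j']; omega))
      have hj' : (pathGraph n).dist i j' ≤ d :=
        (ih (Fin.le_def.mpr (Nat.le_add_right _ _)) rfl).trans_eq (Nat.add_sub_cancel_left ..)
      calc (pathGraph n).dist i j ≤ (pathGraph n).dist i j' + (pathGraph n).dist j' j :=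
            hadj.reachable.dist_triangle_right i
        _ ≤ j - i := by
          rw [dist_eq_one_iff_adj.mpr hadj]
          omega
  · obtain ⟨p, hp⟩ := (pathGraph_preconnected n i j).exists_walk_length_eq_dist
    have := pathGraph_le_add_length p
    omega

variable {f : V → ℤ}

theorem Walk.exists_adj_of_le_of_lt (hf : ∀ u v, G.Adj u v → f v ≤ f u + 1) {k : ℤ} :
    ∀ {x y : V}, G.Walk x y → f x ≤ k → k < f y → ∃ u v, G.Adj u v ∧ f u = k ∧ f v = k + 1
  | _, _, .nil, hx, hy => by omega
  | x, _, .cons (v := z) h p, hx, hy => by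
    by_cases hz : f z ≤ k
    · exact p.exists_adj_of_le_of_lt hf hz hy
    · exact ⟨x, z, h, by have := hf x z h; omega, by have := hf x z h; omega⟩

theorem Connected.exists_eq_of_le_of_le (hG : G.Connected) (hf : ∀ u v, G.Adj u v → f v ≤ f u + 1)
    {x y : V} {k : ℤ} (hx : f x ≤ k) (hy : k ≤ f y) : ∃ w, f w = k := by
  rcases hy.lt_or_eq with hy | rfl
  · obtain ⟨u, -, -, hu, -⟩ := (hG x y).some.exists_adj_of_le_of_lt hf hx hy
    exact ⟨u, hu⟩
  · exact ⟨y, rfl⟩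

theorem Connected.adj_of_add_one_eq (hG : G.Connected) (hf : ∀ u v, G.Adj u v → f v ≤ f u + 1)
    (hinj : Function.Injective f) {u v : V} (h : f u + 1 = f v) : G.Adj u v := by
  obtain ⟨a, b, hab, ha, hb⟩ := (hG u v).some.exists_adj_of_le_of_lt hf le_rfl (by omega)
  rwa [← hinj ha, ← hinj (hb.trans h)]

theorem Connected.nonempty_iso_pathGraph [Fintype V] (hG : G.Connected)
    (hinj : Function.Injective f) (hf : ∀ u v, G.Adj u v → f v ≤ f u + 1) :
    Nonempty (G ≃g pathGraph (Fintype.card V)) := by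
  classical
  have : Nonempty V := hG.nonempty
  obtain ⟨x₀, -, hx₀⟩ := Finset.univ.exists_min_image f Finset.univ_nonempty
  have hmin (v : V) : f x₀ ≤ f v := hx₀ v (Finset.mem_univ _)
  have hlt (v : V) : f v - f x₀ < Fintype.card V := by
    have hsub : Finset.Icc (f x₀) (f v) ⊆ Finset.univ.image f := fun k hk => by
      rw [Finset.mem_Icc] at hk
      obtain ⟨w, hw⟩ := hG.exists_eq_of_le_of_le hf hk.1 hk.2
      exact Finset.mem_image.mpr ⟨w, Finset.mem_univ _, hw⟩
    have := (Finset.card_le_card hsub).trans Finset.card_image_le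
    rw [Int.card_Icc, Finset.card_univ] at this
    omega
  let φ (v : V) : Fin (Fintype.card V) :=
    ⟨(f v - f x₀).toNat, by have := hlt v; have := hmin v; omega⟩
  have hφ (v : V) : ((φ v : ℕ) : ℤ) = f v - f x₀ := Int.toNat_of_nonneg (sub_nonneg.mpr (hmin v))
  have hφinj : Function.Injective φ := fun u v h => hinj <| by
    have := hφ u
    have := hφ v
    rw [h] at *
    omega
  refine ⟨⟨Equiv.ofBijective φ ((Fintype.bijective_iff_injective_and_card φ).mpr
    ⟨hφinj, (Fintype.card_fin _).symm⟩), fun {u v} => ?_⟩⟩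
  have := hφ u
  have := hφ v
  rw [Equiv.ofBijective_apply, Equiv.ofBijective_apply, pathGraph_adj]
  constructor
  · rintro (h | h)
    · exact hG.adj_of_add_one_eq hf hinj (by omega)
    · exact (hG.adj_of_add_one_eq hf hinj (by omega)).symm
  · intro h
    have := hf u v h
    have := hf v u h.symm
    have := hinj.ne h.ne
    omega

end SimpleGraph

section

variable {V : Type*} {G : SimpleGraph V} {u v : V} {P : Set V}

theorem Setoid.isPartition_pair_compl {B : Set V} (hB : B.Nonempty) (hBc : Bᶜ.Nonempty) :
    Setoid.IsPartition {B, Bᶜ} := by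
  refine ⟨?_, fun a => ?_⟩
  · rintro (h | h)
    exacts [hB.ne_empty h.symm, hBc.ne_empty h.symm]
  · by_cases ha : a ∈ B
    · exact ⟨B, ⟨.inl rfl, ha⟩, by rintro C ⟨rfl | rfl, haC⟩ <;> simp_all⟩
    · exact ⟨Bᶜ, ⟨.inr rfl, ha⟩, by rintro C ⟨rfl | rfl, haC⟩ <;> simp_all⟩

theorem Setoid.IsPartition.eq_compl_of_pair {A B : Set V} (h : Setoid.IsPartition {A, B})
    (hAB : A ≠ B) : B = Aᶜ := by
  have hdisj : Disjoint A B := h.pairwiseDisjoint (by simp) (by simp) hAB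
  have hcover : A ∪ B = Set.univ := by simpa using h.sUnion_eq_univ
  exact eq_compl_iff_isCompl.mpr ⟨hdisj.symm, codisjoint_iff.mpr (by rw [sup_comm]; exact hcover)⟩

theorem distToSet_le_dist (h : v ∈ P) : distToSet G u P ≤ G.dist u v :=
  Nat.sInf_le ⟨v, h, rfl⟩

theorem exists_dist_eq_distToSet (hP : P.Nonempty) (u : V) :
    ∃ v ∈ P, G.dist u v = distToSet G u P :=
  Nat.sInf_mem (hP.image _)

theorem distToSet_eq_zero_of_mem (h : u ∈ P) : distToSet G u P = 0 :=
  Nat.eq_zero_of_le_zero <| (distToSet_le_dist h).trans_eq dist_self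

theorem SimpleGraph.Connected.distToSet_eq_zero_iff (hG : G.Connected) (hP : P.Nonempty) :
    distToSet G u P = 0 ↔ u ∈ P := by
  refine ⟨fun h => ?_, distToSet_eq_zero_of_mem⟩
  obtain ⟨v, hv, huv⟩ := exists_dist_eq_distToSet (G := G) hP u
  rwa [hG.dist_eq_zero_iff.mp (huv.trans h)]

theorem distToSet_singleton : distToSet G u {v} = G.dist u v := by
  simp [distToSet]

theorem SimpleGraph.Adj.distToSet_le (h : G.Adj u v) (P : Set V) :
    distToSet G u P ≤ distToSet G v P + 1 := by
  rcases P.eq_empty_or_nonempty with rfl | hP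
  · simp [distToSet]
  obtain ⟨x, hx, hvx⟩ := exists_dist_eq_distToSet (G := G) hP v
  calc distToSet G u P ≤ G.dist u x := distToSet_le_dist hx
    _ ≤ G.dist v x + 1 := by
      rw [dist_comm, dist_comm (u := v)]
      rcases h.symm.diff_dist_adj (u := x) with hd | hd | hd <;> omega
    _ = distToSet G v P + 1 := by rw [hvx]

theorem isResolvingPartition_range_singleton (hG : G.Connected) :
    IsResolvingPartition G (Set.range fun v : V => ({v} : Set V)) := by
  refine ⟨⟨?_, fun v => ⟨{v}, ⟨⟨v, rfl⟩, rfl⟩, ?_⟩⟩, fun u v huv => ⟨{u}, ⟨u, rfl⟩, ?_⟩⟩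
  · rintro ⟨v, hv⟩
    exact Set.singleton_ne_empty v hv
  · rintro _ ⟨⟨w, rfl⟩, hw⟩
    rw [Set.mem_singleton_iff.mp hw]
  · rw [distToSet_singleton, distToSet_singleton, dist_self]
    exact (hG.pos_dist_of_ne huv.symm).ne

theorem IsResolvingPartition.two_le_card {Pi : Finset (Set V)} (hPi : IsResolvingPartition G ↑Pi)
    (huv : u ≠ v) : 2 ≤ Pi.card := by
  obtain ⟨P, hP, hd⟩ := hPi.2 u v huv
  obtain ⟨w, hwP⟩ : ∃ w, w ∉ P := by
    by_contra! h
    exact hd (by rw [distToSet_eq_zero_of_mem (h u), distToSet_eq_zero_of_mem (h v)])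
  obtain ⟨Q, ⟨hQ, hwQ⟩, -⟩ := hPi.1.2 w
  exact Finset.one_lt_card.mpr ⟨P, hP, Q, hQ, fun h => hwP (h ▸ hwQ)⟩

theorem partitionDim_le {Pi : Finset (Set V)} (h : IsResolvingPartition G ↑Pi) :
    partitionDim G ≤ Pi.card :=
  Nat.sInf_le ⟨Pi, rfl, h⟩

theorem exists_isResolvingPartition_card_eq_partitionDim [Finite V] (hG : G.Connected) :
    ∃ Pi : Finset (Set V), Pi.card = partitionDim G ∧ IsResolvingPartition G ↑Pi :=
  Nat.sInf_mem (s := {n | ∃ Pi : Finset (Set V), Pi.card = n ∧ IsResolvingPartition G ↑Pi})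
    ⟨_, (Set.finite_range _).toFinset, rfl, by simpa using isResolvingPartition_range_singleton hG⟩

theorem isResolvingPartition_pair_compl_iff {B : Set V} (hB : B.Nonempty) (hBc : Bᶜ.Nonempty) :
    IsResolvingPartition G {B, Bᶜ} ↔ ∀ u v, u ≠ v →
      distToSet G u B ≠ distToSet G v B ∨ distToSet G u Bᶜ ≠ distToSet G v Bᶜ := by
  simp [IsResolvingPartition, Setoid.isPartition_pair_compl hB hBc]

theorem partitionDim_le_two_of_injective_dist [Nontrivial V] {v₀ : V}
    (hinj : Function.Injective fun w => G.dist w v₀) : partitionDim G ≤ 2 := by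
  classical
  have hB : ({v₀} : Set V).Nonempty := Set.singleton_nonempty v₀
  have hBc : ({v₀}ᶜ : Set V).Nonempty := exists_ne v₀
  have hres : IsResolvingPartition G ↑({{v₀}, {v₀}ᶜ} : Finset (Set V)) := by
    rw [Finset.coe_pair, isResolvingPartition_pair_compl_iff hB hBc]
    exact fun u v huv => .inl (by simpa only [distToSet_singleton] using hinj.ne huv)
  exact (partitionDim_le hres).trans Finset.card_le_two

theorem SimpleGraph.Connected.nonempty_iso_pathGraph_of_resolving_compl [Fintype V]
    (hG : G.Connected) {B : Set V} (hB : B.Nonempty) (hBc : Bᶜ.Nonempty)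
    (hres : ∀ u v, u ≠ v →
      distToSet G u B ≠ distToSet G v B ∨ distToSet G u Bᶜ ≠ distToSet G v Bᶜ) :
    Nonempty (G ≃g pathGraph (Fintype.card V)) := by
  classical
  have hside (w : V) : (w ∈ B ∧ distToSet G w B = 0 ∧ 0 < distToSet G w Bᶜ) ∨
      (w ∉ B ∧ distToSet G w Bᶜ = 0 ∧ 0 < distToSet G w B) := by
    by_cases hw : w ∈ B
    · exact .inl ⟨hw, distToSet_eq_zero_of_mem hw,
        Nat.pos_of_ne_zero fun h => (hG.distToSet_eq_zero_iff hBc).mp h hw⟩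
    · exact .inr ⟨hw, distToSet_eq_zero_of_mem (Set.mem_compl hw),
        Nat.pos_of_ne_zero fun h => hw ((hG.distToSet_eq_zero_iff hB).mp h)⟩
  refine hG.nonempty_iso_pathGraph
    (f := fun w => if w ∈ B then (distToSet G w Bᶜ : ℤ) - 1 else -(distToSet G w B : ℤ)) ?_ ?_
  · intro u v huv
    by_contra hne
    rcases hside u with ⟨hu, hu'⟩ | ⟨hu, hu'⟩ <;> rcases hside v with ⟨hv, hv'⟩ | ⟨hv, hv'⟩ <;>
      simp only [hu, hv, if_true, if_false] at huv <;> rcases hres u v hne with h | h <;> omega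
  · intro u v h
    have := h.distToSet_le B
    have := h.symm.distToSet_le B
    have := h.distToSet_le Bᶜ
    have := h.symm.distToSet_le Bᶜ
    rcases hside u with ⟨hu, hu'⟩ | ⟨hu, hu'⟩ <;> rcases hside v with ⟨hv, hv'⟩ | ⟨hv, hv'⟩ <;>
      simp only [hu, hv, if_true, if_false] <;> omega

theorem SimpleGraph.Connected.nonempty_iso_pathGraph_of_card_eq_two [Fintype V]
    (hG : G.Connected) {Pi : Finset (Set V)} (hPi : IsResolvingPartition G ↑Pi)
    (hcard : Pi.card = 2) : Nonempty (G ≃g pathGraph (Fintype.card V)) := by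
  classical
  obtain ⟨A, B, hAB, rfl⟩ := Finset.card_eq_two.mp hcard
  rw [Finset.coe_pair] at hPi
  obtain rfl := hPi.1.eq_compl_of_pair hAB
  have hA := Setoid.nonempty_of_mem_partition hPi.1 (Set.mem_insert _ _)
  have hAc := Setoid.nonempty_of_mem_partition hPi.1 (Set.mem_insert_of_mem _ rfl)
  exact hG.nonempty_iso_pathGraph_of_resolving_compl hA hAc
    ((isResolvingPartition_pair_compl_iff hA hAc).mp hPi)

theorem partitionDim_le_two_of_iso_pathGraph [Fintype V] [Nontrivial V]
    (e : G ≃g pathGraph (Fintype.card V)) : partitionDim G ≤ 2 := by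
  let v₀ := e.symm ⟨0, Fintype.card_pos⟩
  have hdist (w : V) : G.dist w v₀ = e w := by
    rw [← e.dist_eq, e.apply_symm_apply, SimpleGraph.dist_comm,
      pathGraph_dist_of_le (Fin.le_def.mpr (Nat.zero_le _))]
    rfl
  exact partitionDim_le_two_of_injective_dist (v₀ := v₀) fun a b h =>
    e.injective (Fin.ext (by simpa only [hdist] using h))

end

theorem stmt_17 {V : Type*} [Fintype V] (G : SimpleGraph V) (hG : G.Connected)
    (hV : 2 ≤ Fintype.card V) :
    2 ≤ partitionDim G ∧
      (partitionDim G = 2 ↔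
        Nonempty (G ≃g SimpleGraph.pathGraph (Fintype.card V))) := by
  have : Nontrivial V := Fintype.one_lt_card_iff_nontrivial.mp hV
  obtain ⟨u, v, huv⟩ := exists_pair_ne V
  obtain ⟨Pi, hcard, hPi⟩ := exists_isResolvingPartition_card_eq_partitionDim hG
  have htwo : 2 ≤ partitionDim G := hcard ▸ hPi.two_le_card huv
  exact ⟨htwo, fun h => hG.nonempty_iso_pathGraph_of_card_eq_two hPi (hcard.trans h),
    fun ⟨e⟩ => le_antisymm (partitionDim_le_two_of_iso_pathGraph e) htwo⟩
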